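/- arXiv:math-ph/0510074 — 8 statements merged into one kernel-verified Lean document; each statement's English description precedes it below -/
import Mathlib

section
/- Under condition (EQ) (i.e., $\tilde f(1)>1$, or $\tilde f(1)=1$ and $\tilde g(1)<\infty$), the equilibrium state $\bar z_l = \bar N\tilde q_l\bar\mu^l$ with $\tilde f(\bar\mu)=1$, $\bar N=\bar\varrho/\tilde g(\bar\mu)$, is a global minimizer of $\tilde A$ over all nonnegative sequences $z$ with $\sum_l l z_l = \bar\varrho$: for every such $z$, $\tilde A(z)\geq \bar\varrho\ln\bar\mu = \tilde A(\bar z)$. -/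
lemma aux_sub_le_mul_log {x y : ℝ} (hx : 0 ≤ x) (hy : 0 < y) :
    x - y ≤ x * Real.log (x / y) := by
  rcases eq_or_lt_of_le hx with h | h
  · simp [← h]; linarith
  · have h1 : Real.log (y / x) ≤ y / x - 1 := Real.log_le_sub_one_of_pos (by positivity)
    have h2 : Real.log (y / x) = - Real.log (x / y) := by
      rw [← Real.log_inv]; congr 1; field_simp
    have h3 : x * (y / x - 1) = y - x := by field_simp
    nlinarith [mul_le_mul_of_nonneg_left h1 hx]

/-- Under (EQ), the equilibrium state `z̄_l = N̄ q̃_l μ̄^l` (with `f̃(μ̄)=1`,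
`N̄ = ϱ̄/g̃(μ̄)`) is a global minimizer of `Ã` over nonnegative states of mass `ϱ̄`:
every such `z` satisfies `Ã(z) ≥ ϱ̄ log μ̄ = Ã(z̄)`.  (Lean index `l` is paper `l+1`.) -/
theorem stmt3 (q : ℕ → ℝ) (μ ρ : ℝ)
    (hq : ∀ l, 0 < q l)
    (hroot : Filter.Tendsto (fun l : ℕ => q l ^ (1 / ((l : ℝ) + 1)))
      Filter.atTop (nhds 1))
    (hμ0 : 0 < μ) (hμ1 : μ ≤ 1)
    (hf : Summable (fun l : ℕ => q l * μ ^ (l + 1)))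
    (hf1 : (∑' l : ℕ, q l * μ ^ (l + 1)) = 1)
    (hg : Summable (fun l : ℕ => ((l : ℝ) + 1) * q l * μ ^ (l + 1)))
    (hρ : 0 < ρ) :
    (∀ z : ℕ → ℝ, (∀ l, 0 ≤ z l) →
      Summable (fun l : ℕ => ((l : ℝ) + 1) * z l) →
      (∑' l : ℕ, ((l : ℝ) + 1) * z l) = ρ →
      ρ * Real.log μ ≤ ∑' l : ℕ, z l * Real.log (z l / (q l * ∑' n : ℕ, z n))) ∧
    (∑' l : ℕ, ((ρ / ∑' n : ℕ, ((n : ℝ) + 1) * q n * μ ^ (n + 1)) * q l * μ ^ (l + 1)) *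
        Real.log (((ρ / ∑' n : ℕ, ((n : ℝ) + 1) * q n * μ ^ (n + 1)) * q l * μ ^ (l + 1)) /
          (q l * ∑' k : ℕ, (ρ / ∑' n : ℕ, ((n : ℝ) + 1) * q n * μ ^ (n + 1)) * q k * μ ^ (k + 1))))
      = ρ * Real.log μ := by
  have hlogμ : Real.log μ ≤ 0 := Real.log_nonpos hμ0.le hμ1
  constructor
  · -- Part 1: lower bound
    intro z hz hzs hzρ
    by_cases hS : Summable (fun l : ℕ => z l * Real.log (z l / (q l * ∑' n : ℕ, z n)))
    · have hzs' : Summable z := by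
        apply hzs.of_nonneg_of_le hz
        intro l
        exact le_mul_of_one_le_left (hz l) (by simp)
      set M : ℝ := ∑' n : ℕ, z n with hMdef
      have hM0 : 0 < M := by
        by_contra hcon
        push_neg at hcon
        have hall : ∀ l, z l = 0 := by
          intro l
          by_contra hl
          have h1 : 0 < z l := (hz l).lt_of_ne (Ne.symm hl)
          have h2 : z l ≤ M := Summable.le_tsum hzs' l (fun _ _ => hz _)
          linarith
        have : (∑' l : ℕ, ((l : ℝ) + 1) * z l) = 0 := by simp [hall]
        rw [hzρ] at this; linarith
      -- pointwise inequality
      have hpt : ∀ l : ℕ,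
          (((l : ℝ) + 1) * z l * Real.log μ + (z l - M * (q l * μ ^ (l + 1)))) ≤
            z l * Real.log (z l / (q l * M)) := by
        intro l
        have hqlpos := hq l
        have hypos : 0 < M * (q l * μ ^ (l + 1)) := by positivity
        rcases eq_or_lt_of_le (hz l) with h0 | h0
        · rw [← h0]; simp; nlinarith
        · have key := aux_sub_le_mul_log (hz l) hypos
          have hsplit : Real.log (z l / (q l * M)) =
              Real.log (z l / (M * (q l * μ ^ (l + 1)))) + ((l : ℝ) + 1) * Real.log μ := by
            have heq : z l / (q l * M) = (z l / (M * (q l * μ ^ (l + 1)))) * μ ^ (l + 1) := by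
              field_simp
            rw [heq, Real.log_mul (by positivity) (by positivity), Real.log_pow]
            push_cast
            ring
          rw [hsplit]
          nlinarith [key]
      -- summability of the lower sequence
      have hsum1 : Summable (fun l : ℕ => ((l : ℝ) + 1) * z l * Real.log μ) := by
        simpa [mul_assoc] using hzs.mul_right (Real.log μ)
      have hsum2 : Summable (fun l : ℕ => M * (q l * μ ^ (l + 1))) := hf.mul_left M
      have hsumL : Summable (fun l : ℕ =>
          ((l : ℝ) + 1) * z l * Real.log μ + (z l - M * (q l * μ ^ (l + 1)))) :=
        hsum1.add (hzs'.sub hsum2)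
      have htsumL : (∑' l : ℕ,
          (((l : ℝ) + 1) * z l * Real.log μ + (z l - M * (q l * μ ^ (l + 1))))) =
          ρ * Real.log μ := by
        rw [Summable.tsum_add hsum1 (hzs'.sub hsum2), Summable.tsum_sub hzs' hsum2]
        have e1 : (∑' l : ℕ, ((l : ℝ) + 1) * z l * Real.log μ) = ρ * Real.log μ := by
          rw [← hzρ, ← tsum_mul_right]
        have e2 : (∑' l : ℕ, M * (q l * μ ^ (l + 1))) = M := by
          rw [tsum_mul_left, hf1, mul_one]
        rw [e1, e2]
        ring
      calc ρ * Real.log μ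
          = ∑' l : ℕ, (((l : ℝ) + 1) * z l * Real.log μ + (z l - M * (q l * μ ^ (l + 1)))) :=
            htsumL.symm
        _ ≤ ∑' l : ℕ, z l * Real.log (z l / (q l * M)) := Summable.tsum_le_tsum hpt hsumL hS
    · rw [tsum_eq_zero_of_not_summable hS]
      nlinarith
  · -- Part 2: value at the equilibrium state
    set g : ℝ := ∑' n : ℕ, ((n : ℝ) + 1) * q n * μ ^ (n + 1) with hgdef
    have hgpos : 0 < g :=
      Summable.tsum_pos hg (fun i => by have := hq i; positivity) 0 (by have := hq 0; positivity)
    set N : ℝ := ρ / g with hNdef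
    have hN0 : 0 < N := by positivity
    have hNsum : (∑' k : ℕ, N * q k * μ ^ (k + 1)) = N := by
      have : (∑' k : ℕ, N * q k * μ ^ (k + 1)) = ∑' k : ℕ, N * (q k * μ ^ (k + 1)) := by
        apply tsum_congr; intro k; ring
      rw [this, tsum_mul_left, hf1, mul_one]
    rw [hNsum]
    have h2 : ∀ l : ℕ, (N * q l * μ ^ (l + 1)) *
        Real.log ((N * q l * μ ^ (l + 1)) / (q l * N)) =
        (Real.log μ * N) * (((l : ℝ) + 1) * q l * μ ^ (l + 1)) := by
      intro l
      have hqlpos := hq l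
      have heq : (N * q l * μ ^ (l + 1)) / (q l * N) = μ ^ (l + 1) := by
        field_simp
      rw [heq, Real.log_pow]
      push_cast
      ring
    rw [tsum_congr h2, tsum_mul_left, ← hgdef]
    rw [hNdef]
    field_simp
end

section
/- Assume $\tilde q_l>0$, $\tilde q_l\leq 1$, $\lim_l \tilde q_l^{1/l}=1$, and condition (NEQ): either $\tilde f(1)<1$, or $\tilde f(1)=1$ and $\tilde g(1)=\infty$. Then there is no nonnegative sequence $z$ with $\sum_l l z_l = \bar\varrho>0$ and $\tilde A(z)=0$; i.e., the infimum $0$ of $\tilde A$ under the mass constraint is not attained. -/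
open ENNReal

lemma key_lt (z b : ℝ) (hz : 0 ≤ z) (hb : 0 < b) (hne : z ≠ b) :
    z - b < z * Real.log (z / b) := by
  rcases eq_or_lt_of_le hz with h0 | h0
  · rw [← h0]; simpa using hb
  · have hbz : b / z ≠ 1 := by
      intro h
      field_simp at h
      exact hne h.symm
    have hlog : Real.log (b / z) < b / z - 1 :=
      Real.log_lt_sub_one_of_pos (by positivity) hbz
    have hlog2 : Real.log (z / b) = - Real.log (b / z) := by
      rw [← Real.log_inv]
      congr 1
      field_simp
    have hzb : z * (b / z) = b := by field_simp
    rw [hlog2]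
    nlinarith [mul_lt_mul_of_pos_left hlog h0]

lemma key_le (z b : ℝ) (hz : 0 ≤ z) (hb : 0 < b) :
    z - b ≤ z * Real.log (z / b) := by
  rcases eq_or_ne z b with h | h
  · subst h
    rw [div_self hb.ne', Real.log_one]
    simp
  · exact (key_lt z b hz hb h).le

/-- Under condition (NEQ) — `f̃(1) < 1`, or `f̃(1) = 1` and `g̃(1) = ∞` — there is no
nonnegative state `z` of positive mass `ϱ̄` with (well-defined) availability `Ã(z) = 0`:
the infimum `0` of `Ã` under the mass constraint is not attained.
(Lean index `l` is paper index `l+1`.) -/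
theorem stmt4 (q : ℕ → ℝ) (ρ : ℝ)
    (hq : ∀ l, 0 < q l) (hq1 : ∀ l, q l ≤ 1)
    (hroot : Filter.Tendsto (fun l : ℕ => q l ^ (1 / ((l : ℝ) + 1)))
      Filter.atTop (nhds 1))
    (hNEQ : (∑' l : ℕ, ENNReal.ofReal (q l)) < 1 ∨
      ((∑' l : ℕ, ENNReal.ofReal (q l)) = 1 ∧
        (∑' l : ℕ, ENNReal.ofReal (((l : ℝ) + 1) * q l)) = ⊤))
    (hρ : 0 < ρ) :
    ¬ ∃ z : ℕ → ℝ, (∀ l, 0 ≤ z l) ∧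
      Summable (fun l : ℕ => ((l : ℝ) + 1) * z l) ∧
      (∑' l : ℕ, ((l : ℝ) + 1) * z l) = ρ ∧
      Summable (fun l : ℕ => z l * Real.log (z l / (q l * ∑' n : ℕ, z n))) ∧
      (∑' l : ℕ, z l * Real.log (z l / (q l * ∑' n : ℕ, z n))) = 0 := by
  rintro ⟨z, hz0, hsum1, hmass, hAsum, hA⟩
  set N := ∑' n : ℕ, z n with hN
  -- z is summable
  have hzsum : Summable z := by
    refine hsum1.of_nonneg_of_le hz0 (fun l => ?_)
    have h1 : (1 : ℝ) ≤ (l : ℝ) + 1 := by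
      have := Nat.cast_nonneg (α := ℝ) l
      linarith
    nlinarith [hz0 l]
  -- N > 0
  have hNpos : 0 < N := by
    obtain ⟨l0, hl0⟩ : ∃ l, 0 < z l := by
      by_contra h
      push_neg at h
      have hz : ∀ l, z l = 0 := fun l => le_antisymm (h l) (hz0 l)
      have : (∑' l : ℕ, ((l : ℝ) + 1) * z l) = 0 := by
        simp [hz]
      rw [hmass] at this
      linarith
    exact lt_of_lt_of_le hl0 (Summable.le_tsum hzsum l0 (fun j _ => hz0 j))
  -- q is summable (both cases of hNEQ give finite tsum of ofReal)
  have hqtop : (∑' l : ℕ, ENNReal.ofReal (q l)) ≠ ⊤ := by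
    rcases hNEQ with h | ⟨h, _⟩
    · exact h.ne_top
    · rw [h]; exact one_ne_top
  have hqsum : Summable q := by
    have h1 : (∑' l : ℕ, ((q l).toNNReal : ℝ≥0∞)) ≠ ⊤ := hqtop
    have h2 : Summable (fun l => (q l).toNNReal) :=
      ENNReal.tsum_coe_ne_top_iff_summable.mp h1
    have h3 : Summable (fun l => ((q l).toNNReal : ℝ)) := NNReal.summable_coe.mpr h2
    refine h3.congr (fun l => ?_)
    exact Real.coe_toNNReal _ (hq l).le
  have hofReal : (∑' l : ℕ, ENNReal.ofReal (q l)) = ENNReal.ofReal (∑' l, q l) :=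
    (ENNReal.ofReal_tsum_of_nonneg (fun l => (hq l).le) hqsum).symm
  set f1 := ∑' l, q l with hf1
  -- termwise bound
  have hterm : ∀ l, z l - q l * N ≤ z l * Real.log (z l / (q l * N)) :=
    fun l => key_le _ _ (hz0 l) (mul_pos (hq l) hNpos)
  have hqNsum : Summable (fun l => q l * N) := hqsum.mul_right N
  have hsub : Summable (fun l => z l - q l * N) := hzsum.sub hqNsum
  have hsum_sub : (∑' l, (z l - q l * N)) = N - f1 * N := by
    rw [Summable.tsum_sub hzsum hqNsum, tsum_mul_right]
  rcases hNEQ with hlt | ⟨heq, htop⟩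
  · -- Case f̃(1) < 1
    have hf1lt : f1 < 1 := by
      rw [hofReal] at hlt
      exact ENNReal.ofReal_lt_one.mp hlt
    have := Summable.tsum_le_tsum hterm hsub hAsum
    rw [hA, hsum_sub] at this
    nlinarith
  · -- Case f̃(1) = 1 and g̃(1) = ∞
    have hf1eq : f1 = 1 := by
      rw [hofReal] at heq
      exact ENNReal.ofReal_eq_one.mp heq
    -- equality must hold termwise
    have hall : ∀ l, z l = q l * N := by
      intro l
      by_contra hne
      have hstrict : z l - q l * N < z l * Real.log (z l / (q l * N)) :=
        key_lt _ _ (hz0 l) (mul_pos (hq l) hNpos) hne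
      have := Summable.tsum_lt_tsum hterm hstrict hsub hAsum
      rw [hA, hsum_sub, hf1eq] at this
      simp at this
    -- then (l+1) * q l is summable, contradicting g̃(1) = ∞
    have hgsum : Summable (fun l : ℕ => ((l : ℝ) + 1) * q l) := by
      have : (fun l : ℕ => ((l : ℝ) + 1) * q l)
          = fun l : ℕ => (((l : ℝ) + 1) * z l) * (1 / N) := by
        funext l
        rw [hall l]
        field_simp
      rw [this]
      exact hsum1.mul_right _
    have : (∑' l : ℕ, ENNReal.ofReal (((l : ℝ) + 1) * q l))
        = ENNReal.ofReal (∑' l : ℕ, ((l : ℝ) + 1) * q l) :=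
      (ENNReal.ofReal_tsum_of_nonneg
        (fun l => mul_nonneg (by positivity) (hq l).le) hgsum).symm
    rw [htop] at this
    exact ENNReal.ofReal_ne_top this.symm
end

section
/- Let $\tilde q_l\in(0,1]$ with $\lim_l\tilde q_l^{1/l}=1$, and define $q^{(m)}_l = \max\{\tilde q_l, \pi_m\}$ with $\pi_m=\sup_{l>m}\tilde q_l$. Then for every nonnegative $z$ with $\sum_l l z_l = \bar\varrho$: $\mathcal{A}(z,q^{(m)}) \leq \mathcal{A}(z,\tilde q) \leq \mathcal{A}(z,q^{(m)}) + \bar\varrho\,\eta_m$, where $\eta_m = \sup_{l\geq l_m}|l^{-1}\ln\tilde q_l|$ and $l_m = \min\{l : \tilde q_l < \pi_m\}$, and $\eta_m\to 0$ as $m\to\infty$; consequently $\mathcal{A}(z,q^{(m)}) \uparrow \mathcal{A}(z,\tilde q)$. -/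
/-- Generalized availability `𝒜(z,p) = ∑ z_l log(z_l/(p_l N(z)))`. -/
noncomputable def avail (z p : ℕ → ℝ) : ℝ :=
  ∑' l : ℕ, z l * Real.log (z l / (p l * ∑' n : ℕ, z n))

/-- `π_m = sup_{l > m} q̃_l`. -/
noncomputable def pim (q : ℕ → ℝ) (m : ℕ) : ℝ := ⨆ l : {l : ℕ // m < l}, q l.1

/-- The truncated weights `q^{(m)}_l = max {q̃_l, π_m}`. -/
noncomputable def qm (q : ℕ → ℝ) (m l : ℕ) : ℝ := max (q l) (pim q m)

/-- `l_m = min { l : q̃_l < π_m }`. -/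
noncomputable def lm (q : ℕ → ℝ) (m : ℕ) : ℕ := sInf {l | q l < pim q m}

/-- `η_m = sup_{l ≥ l_m} |l⁻¹ log q̃_l|`. -/
noncomputable def etam (q : ℕ → ℝ) (m : ℕ) : ℝ :=
  ⨆ l : {l : ℕ // lm q m ≤ l}, |Real.log (q l.1)| / ((l.1 : ℝ) + 1)

/-- Approximation of the availability by the truncated weights `q^{(m)}`:
`𝒜(z,q^{(m)}) ≤ 𝒜(z,q̃) ≤ 𝒜(z,q^{(m)}) + ϱ̄ η_m`, with `η_m → 0`, and consequently
`𝒜(z,q^{(m)}) ↑ 𝒜(z,q̃)`.  (Lean index `l` is paper index `l+1`.) -/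
theorem stmt8 (q : ℕ → ℝ) (ρ : ℝ)
    (hq : ∀ l, 0 < q l) (hq1 : ∀ l, q l ≤ 1)
    (hroot : Filter.Tendsto (fun l : ℕ => q l ^ (1 / ((l : ℝ) + 1)))
      Filter.atTop (nhds 1))
    (hq0 : Filter.Tendsto q Filter.atTop (nhds 0))
    (z : ℕ → ℝ) (hz : ∀ l, 0 ≤ z l)
    (hmass : Summable (fun l : ℕ => ((l : ℝ) + 1) * z l))
    (hmassρ : (∑' l : ℕ, ((l : ℝ) + 1) * z l) = ρ)
    (hA : Summable (fun l : ℕ => z l * Real.log (z l / (q l * ∑' n : ℕ, z n)))) :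
    (∀ m, avail z (qm q m) ≤ avail z q ∧
      avail z q ≤ avail z (qm q m) + ρ * etam q m) ∧
    Filter.Tendsto (etam q) Filter.atTop (nhds 0) ∧
    Monotone (fun m => avail z (qm q m)) ∧
    Filter.Tendsto (fun m => avail z (qm q m)) Filter.atTop (nhds (avail z q)) := by
  classical
  have hz_sum : Summable z :=
    Summable.of_nonneg_of_le hz
      (fun l => le_mul_of_one_le_left (hz l) (by linarith [(Nat.cast_nonneg l : (0:ℝ) ≤ l)])) hmass
  set N := ∑' n : ℕ, z n with hNdef
  -- pim facts
  have hbdd : ∀ m, BddAbove (Set.range fun l : {l : ℕ // m < l} => q l.1) := fun m =>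
    ⟨1, by rintro x ⟨l, rfl⟩; exact hq1 l.1⟩
  have hNE : ∀ m, Nonempty {l : ℕ // m < l} := fun m => ⟨⟨m + 1, Nat.lt_succ_self m⟩⟩
  have hq_le_pim : ∀ m l, m < l → q l ≤ pim q m := fun m l h => le_ciSup (hbdd m) ⟨l, h⟩
  have hpim_pos : ∀ m, 0 < pim q m := fun m =>
    lt_of_lt_of_le (hq (m + 1)) (hq_le_pim m (m + 1) (Nat.lt_succ_self m))
  have hpim_le1 : ∀ m, pim q m ≤ 1 := fun m => by
    haveI := hNE m; exact ciSup_le (fun l => hq1 l.1)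
  have hpim_anti : Antitone (pim q) := fun a b hab => by
    haveI := hNE b
    exact ciSup_le fun l => hq_le_pim a l.1 (lt_of_le_of_lt hab l.2)
  have hpim_to0 : Filter.Tendsto (pim q) Filter.atTop (nhds 0) := by
    rw [Metric.tendsto_atTop]
    intro ε hε
    obtain ⟨M, hM⟩ := Metric.tendsto_atTop.1 hq0 (ε / 2) (half_pos hε)
    refine ⟨M, fun m hm => ?_⟩
    have h1 : pim q m ≤ ε / 2 := by
      haveI := hNE m
      refine ciSup_le fun l => le_of_lt ?_
      have := hM l.1 (le_trans hm (le_of_lt l.2))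
      rwa [Real.dist_eq, sub_zero, abs_of_pos (hq l.1)] at this
    rw [Real.dist_eq, sub_zero, abs_of_pos (hpim_pos m)]
    linarith
  -- lm facts
  have hS_ne : ∀ m, {l | q l < pim q m}.Nonempty := fun m => by
    obtain ⟨L, hL⟩ := Metric.tendsto_atTop.1 hq0 (pim q m) (hpim_pos m)
    refine ⟨L, ?_⟩
    have := hL L le_rfl
    rwa [Real.dist_eq, sub_zero, abs_of_pos (hq L)] at this
  have hlm_mem : ∀ m, q (lm q m) < pim q m := fun m => Nat.sInf_mem (hS_ne m)
  have hlm_tendsto : Filter.Tendsto (lm q) Filter.atTop Filter.atTop := by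
    rw [Filter.tendsto_atTop]
    intro L
    have h1 : ∀ᶠ m in Filter.atTop, ∀ l ∈ Finset.range L, pim q m < q l := by
      rw [Filter.eventually_all_finset]
      intro l _
      exact hpim_to0.eventually_lt_const (hq l)
    filter_upwards [h1] with m hm
    by_contra hcon
    push_neg at hcon
    exact absurd (hlm_mem m) (not_lt.2 (le_of_lt (hm _ (Finset.mem_range.2 hcon))))
  -- the sequence a
  set a : ℕ → ℝ := fun l => |Real.log (q l)| / ((l : ℝ) + 1) with hadef
  have ha0 : Filter.Tendsto a Filter.atTop (nhds 0) := by
    have h1 : Filter.Tendsto (fun l : ℕ => Real.log (q l ^ (1 / ((l : ℝ) + 1))))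
        Filter.atTop (nhds 0) := by
      have := (Real.continuousAt_log one_ne_zero).tendsto.comp hroot
      simpa [Function.comp_def] using this
    have h2 : (fun l : ℕ => |Real.log (q l ^ (1 / ((l : ℝ) + 1)))|) = a := by
      funext l
      rw [Real.log_rpow (hq l), hadef]
      have hl1 : (0:ℝ) < (l : ℝ) + 1 := by positivity
      rw [abs_mul, abs_of_pos (by positivity : (0:ℝ) < 1 / ((l : ℝ) + 1))]
      ring
    have := h1.abs
    rw [abs_zero] at this
    rwa [h2] at this
  have hbddA : BddAbove (Set.range a) := ha0.bddAbove_range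
  have hbddE : ∀ m, BddAbove (Set.range fun l : {l : ℕ // lm q m ≤ l} => a l.1) := fun m =>
    hbddA.mono (by rintro x ⟨l, rfl⟩; exact ⟨l.1, rfl⟩)
  have hNE' : ∀ m, Nonempty {l : ℕ // lm q m ≤ l} := fun m => ⟨⟨lm q m, le_rfl⟩⟩
  have hetam_eq : ∀ m, etam q m = ⨆ l : {l : ℕ // lm q m ≤ l}, a l.1 := fun m => rfl
  have ha_nonneg : ∀ l, 0 ≤ a l := fun l => by rw [hadef]; positivity
  have ha_le_etam : ∀ m l, lm q m ≤ l → a l ≤ etam q m := fun m l h => by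
    rw [hetam_eq]; exact le_ciSup (hbddE m) ⟨l, h⟩
  have hetam_nonneg : ∀ m, 0 ≤ etam q m := fun m =>
    le_trans (ha_nonneg (lm q m)) (ha_le_etam m (lm q m) le_rfl)
  have hetam_to0 : Filter.Tendsto (etam q) Filter.atTop (nhds 0) := by
    rw [Metric.tendsto_atTop]
    intro ε hε
    obtain ⟨L0, hL0⟩ := Metric.tendsto_atTop.1 ha0 (ε / 2) (by positivity)
    obtain ⟨M, hM⟩ := Filter.eventually_atTop.1 (Filter.tendsto_atTop.1 hlm_tendsto L0)
    refine ⟨M, fun m hm => ?_⟩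
    have h1 : etam q m ≤ ε / 2 := by
      rw [hetam_eq]
      haveI := hNE' m
      refine ciSup_le fun l => le_of_lt ?_
      have := hL0 l.1 (le_trans (hM m hm) l.2)
      rwa [Real.dist_eq, sub_zero, abs_of_nonneg (ha_nonneg l.1)] at this
    rw [Real.dist_eq, sub_zero, abs_of_nonneg (hetam_nonneg m)]
    linarith
  -- qm facts
  have hqm_pos : ∀ m l, 0 < qm q m l := fun m l => lt_of_lt_of_le (hq l) (le_max_left _ _)
  have hq_le_qm : ∀ m l, q l ≤ qm q m l := fun m l => le_max_left _ _
  -- the difference sequence d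
  set d : ℕ → ℕ → ℝ := fun m l => z l * Real.log (qm q m l / q l) with hddef
  have hd0 : ∀ m l, 0 ≤ d m l := fun m l =>
    mul_nonneg (hz l) (Real.log_nonneg ((one_le_div (hq l)).2 (hq_le_qm m l)))
  have hdle : ∀ m l, d m l ≤ ((l : ℝ) + 1) * z l * etam q m := by
    intro m l
    by_cases h : q l < pim q m
    · have hlml : lm q m ≤ l := Nat.sInf_le h
      have hqm1 : qm q m l ≤ 1 := max_le (hq1 l) (hpim_le1 m)
      have hlog1 : Real.log (qm q m l / q l) ≤ Real.log (1 / q l) := by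
        have h1 : qm q m l / q l ≤ 1 / q l := (div_le_div_iff_of_pos_right (hq l)).2 hqm1
        exact Real.log_le_log (div_pos (hqm_pos m l) (hq l)) h1
      have hlog2 : Real.log (1 / q l) = |Real.log (q l)| := by
        rw [Real.log_div one_ne_zero (hq l).ne', Real.log_one,
          abs_of_nonpos (Real.log_nonpos (hq l).le (hq1 l))]
        ring
      have hlog3 : |Real.log (q l)| ≤ ((l : ℝ) + 1) * etam q m := by
        have := ha_le_etam m l hlml
        rw [hadef] at this
        have hl1 : (0:ℝ) < (l : ℝ) + 1 := by positivity
        rw [div_le_iff₀ hl1] at this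
        linarith
      calc d m l ≤ z l * (((l : ℝ) + 1) * etam q m) := by
            exact mul_le_mul_of_nonneg_left (le_trans hlog1 (hlog2 ▸ hlog3)) (hz l)
        _ = ((l : ℝ) + 1) * z l * etam q m := by ring
    · have : qm q m l = q l := max_eq_left (not_lt.1 h)
      have hd : d m l = 0 := by
        rw [hddef]; simp [this, div_self (hq l).ne']
      rw [hd]
      have := hetam_nonneg m
      have := hz l
      positivity
  have hd_sum : ∀ m, Summable (d m) := fun m =>
    Summable.of_nonneg_of_le (hd0 m) (hdle m) (hmass.mul_right (etam q m))
  -- pointwise identity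
  have hpoint : ∀ m l, z l * Real.log (z l / (q l * N)) =
      z l * Real.log (z l / (qm q m l * N)) + d m l := by
    intro m l
    rcases eq_or_lt_of_le (hz l) with h0 | h0
    · simp [hddef, ← h0]
    · have hNpos : 0 < N := by
        refine lt_of_lt_of_le h0 ?_
        rw [hNdef]
        exact Summable.le_tsum hz_sum l fun n _ => hz n
      simp only [hddef]
      rw [Real.log_div h0.ne' (mul_ne_zero (hq l).ne' hNpos.ne'),
        Real.log_div h0.ne' (mul_ne_zero (hqm_pos m l).ne' hNpos.ne'),
        Real.log_div (hqm_pos m l).ne' (hq l).ne',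
        Real.log_mul (hq l).ne' hNpos.ne', Real.log_mul (hqm_pos m l).ne' hNpos.ne']
      ring
  have hg_sum : ∀ m, Summable (fun l => z l * Real.log (z l / (qm q m l * N))) := by
    intro m
    have : (fun l => z l * Real.log (z l / (qm q m l * N))) =
        fun l => z l * Real.log (z l / (q l * N)) - d m l := by
      funext l; rw [hpoint m l]; ring
    rw [this]
    exact hA.sub (hd_sum m)
  have hkey : ∀ m, avail z q = avail z (qm q m) + ∑' l, d m l := by
    intro m
    unfold avail
    rw [← hNdef, ← Summable.tsum_add (hg_sum m) (hd_sum m)]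
    exact tsum_congr (hpoint m)
  have hD0 : ∀ m, 0 ≤ ∑' l, d m l := fun m => tsum_nonneg (hd0 m)
  have hDle : ∀ m, ∑' l, d m l ≤ ρ * etam q m := by
    intro m
    calc ∑' l, d m l ≤ ∑' l : ℕ, ((l : ℝ) + 1) * z l * etam q m :=
          Summable.tsum_le_tsum (hdle m) (hd_sum m) (hmass.mul_right _)
      _ = (∑' l : ℕ, ((l : ℝ) + 1) * z l) * etam q m := by
            exact tsum_mul_right (f := fun l : ℕ => ((l : ℝ) + 1) * z l)
      _ = ρ * etam q m := by rw [hmassρ]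
  refine ⟨fun m => ⟨by linarith [hkey m, hD0 m], by linarith [hkey m, hDle m]⟩,
    hetam_to0, ?_, ?_⟩
  · -- Monotone
    intro m m' h
    have hmono : ∑' l, d m' l ≤ ∑' l, d m l := by
      refine Summable.tsum_le_tsum (fun l => ?_) (hd_sum m') (hd_sum m)
      simp only [hddef]
      refine mul_le_mul_of_nonneg_left ?_ (hz l)
      exact Real.log_le_log (div_pos (hqm_pos m' l) (hq l))
        ((div_le_div_iff_of_pos_right (hq l)).2 (max_le_max le_rfl (hpim_anti h)))
    simp only
    linarith [hkey m, hkey m']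
  · -- Tendsto
    have hρ0 : 0 ≤ ρ := by
      rw [← hmassρ]
      exact tsum_nonneg fun l => mul_nonneg (by positivity) (hz l)
    have hub : Filter.Tendsto (fun m => ρ * etam q m) Filter.atTop (nhds 0) := by
      have := hetam_to0.const_mul ρ
      simpa using this
    have hD_to0 : Filter.Tendsto (fun m => ∑' l, d m l) Filter.atTop (nhds 0) :=
      tendsto_of_tendsto_of_tendsto_of_le_of_le tendsto_const_nhds hub hD0 hDle
    have heq : (fun m => avail z (qm q m)) = fun m => avail z q - ∑' l, d m l := by
      funext m; linarith [hkey m]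
    rw [heq]
    simpa using tendsto_const_nhds.sub hD_to0
end

section
/- Let $\delta^{(m)}$ be the Dirac sequence at $m$ ($\delta^{(m)}_m=1$, else $0$), and let $\widehat{\delta^{(m)}}$ be its minimal $S$-majorant. Then $\widehat{\delta^{(m)}}_l=1$ for all $l\leq m$, $\|\widehat{\delta^{(m)}}\|_{\ell^\infty}=1$, and $\|\widehat{\delta^{(m)}}\|_{\ell^1}\leq m+\eta_0/(1-\eta_0)$, where $\eta_0=\sup_{l\geq l_0}\eta_l<1$. -/
/-- The Ball–Carr set `S` (condition at index `l+1` imposed whenever `l0 ≤ l + 1`). -/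
def mS (η : ℕ → ℝ) (l0 : ℕ) : Set (ℕ → ℝ) :=
  {σ | (∀ l, 0 ≤ σ l) ∧ (∀ l, σ (l + 1) ≤ σ l) ∧
    ∀ l, l0 ≤ l → η (l + 1) * (σ l - σ (l + 1)) ≤ σ (l + 1) - σ (l + 2)}

/-- The pointwise infimum of all `S`-majorants of `ξ`. -/
noncomputable def hatS (η : ℕ → ℝ) (l0 : ℕ) (ξ : ℕ → ℝ) : ℕ → ℝ :=
  fun l : ℕ => sInf {x : ℝ | ∃ σ : ℕ → ℝ,
    σ ∈ mS η l0 ∧ (∀ l', l0 ≤ l' → ξ l' ≤ σ l') ∧ x = σ l}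

/-- The minimal `S`-majorant of the Dirac sequence `δ^{(m)}` equals `1` up to index `m`,
has sup-norm `1`, and `ℓ¹`-norm at most `(m+1) + η₀/(1-η₀)`.
(0-based Lean index `l` is paper index `l+1`; the paper bound `m + η₀/(1-η₀)` for the
Dirac at paper index `m+1` reads `(m+1) + η₀/(1-η₀)` here.) -/
theorem stmt11 (η : ℕ → ℝ) (l0 : ℕ) (η0 : ℝ)
    (hη : ∀ l, 0 < η l) (hη0 : η0 < 1) (hsup : ∀ l, l0 ≤ l → η (l + 1) ≤ η0)
    (m : ℕ) (hm : l0 ≤ m) :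
    (∀ l, l ≤ m → hatS η l0 (fun l' => if l' = m then (1 : ℝ) else 0) l = 1) ∧
    (∀ l, hatS η l0 (fun l' => if l' = m then (1 : ℝ) else 0) l ≤ 1) ∧
    Summable (hatS η l0 (fun l' => if l' = m then (1 : ℝ) else 0)) ∧
    (∑' l : ℕ, hatS η l0 (fun l' => if l' = m then (1 : ℝ) else 0) l) ≤
      ((m : ℝ) + 1) + η0 / (1 - η0) := by
  set ξ : ℕ → ℝ := fun l' => if l' = m then (1 : ℝ) else 0 with hξdef
  have hη0pos : 0 < η0 := lt_of_lt_of_le (hη (l0 + 1)) (hsup l0 le_rfl)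
  set σ : ℕ → ℝ := fun l => if l ≤ m then 1 else η0 ^ (l - m) with hσdef
  have hσ1 : ∀ l, l ≤ m → σ l = 1 := fun l hl => if_pos hl
  have hσ2 : ∀ l, m < l → σ l = η0 ^ (l - m) := fun l hl => if_neg (by omega)
  have hσnonneg : ∀ l, 0 ≤ σ l := by
    intro l
    by_cases hl : l ≤ m
    · rw [hσ1 l hl]; norm_num
    · rw [hσ2 l (by omega)]; positivity
  have hσle1 : ∀ l, σ l ≤ 1 := by
    intro l
    by_cases hl : l ≤ m
    · rw [hσ1 l hl]
    · rw [hσ2 l (by omega)]; exact pow_le_one₀ hη0pos.le hη0.le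
  have hσmono : ∀ l, σ (l + 1) ≤ σ l := by
    intro l
    by_cases hl : l + 1 ≤ m
    · rw [hσ1 _ hl, hσ1 _ (by omega)]
    · rw [hσ2 (l + 1) (by omega)]
      by_cases hl' : l ≤ m
      · rw [hσ1 _ hl']; exact pow_le_one₀ hη0pos.le hη0.le
      · rw [hσ2 l (by omega)]
        exact pow_le_pow_of_le_one hη0pos.le hη0.le (by omega)
  have hσcond : ∀ l, l0 ≤ l → η (l + 1) * (σ l - σ (l + 1)) ≤ σ (l + 1) - σ (l + 2) := by
    intro l hl
    rcases lt_trichotomy l m with h | h | h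
    · have e : σ l = σ (l + 1) := by rw [hσ1 l (by omega), hσ1 (l + 1) (by omega)]
      rw [e]
      have h3 := hσmono (l + 1)
      have e2 : l + 1 + 1 = l + 2 := by omega
      rw [e2] at h3
      simp only [sub_self, mul_zero]
      linarith
    · subst h
      rw [hσ1 l le_rfl, hσ2 (l + 1) (by omega), hσ2 (l + 2) (by omega)]
      have h1 : l + 1 - l = 1 := by omega
      have h2 : l + 2 - l = 2 := by omega
      rw [h1, h2]
      have := mul_le_mul_of_nonneg_right (hsup l hl) (sub_nonneg.2 hη0.le)
      nlinarith
    · rw [hσ2 l (by omega), hσ2 (l + 1) (by omega), hσ2 (l + 2) (by omega)]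
      have h1 : l + 1 - m = (l - m) + 1 := by omega
      have h2 : l + 2 - m = (l - m) + 2 := by omega
      rw [h1, h2]
      have hk : (0:ℝ) ≤ η0 ^ (l - m) := by positivity
      have hd : (0:ℝ) ≤ η0 ^ (l - m) - η0 ^ (l - m + 1) := by
        rw [pow_succ]; nlinarith
      have := mul_le_mul_of_nonneg_right (hsup l (le_trans hm (by omega))) hd
      have e1 : η0 ^ (l - m + 1) = η0 ^ (l - m) * η0 := pow_succ _ _
      have e2 : η0 ^ (l - m + 2) = η0 ^ (l - m) * η0 * η0 := by
        rw [pow_succ, pow_succ]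
      nlinarith
  have hσS : σ ∈ mS η l0 := ⟨hσnonneg, hσmono, hσcond⟩
  have hσmaj : ∀ l', l0 ≤ l' → ξ l' ≤ σ l' := by
    intro l' _
    by_cases h : l' = m
    · subst h; simp [hξdef, hσ1 l' le_rfl]
    · simp only [hξdef, if_neg h]; exact hσnonneg l'
  have hmem : ∀ l, σ l ∈ {x : ℝ | ∃ σ' : ℕ → ℝ,
      σ' ∈ mS η l0 ∧ (∀ l', l0 ≤ l' → ξ l' ≤ σ' l') ∧ x = σ' l} :=
    fun l => ⟨σ, hσS, hσmaj, rfl⟩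
  have hbdd : ∀ l, BddBelow {x : ℝ | ∃ σ' : ℕ → ℝ,
      σ' ∈ mS η l0 ∧ (∀ l', l0 ≤ l' → ξ l' ≤ σ' l') ∧ x = σ' l} := by
    intro l
    refine ⟨0, ?_⟩
    rintro x ⟨σ', hσ', _, rfl⟩
    exact hσ'.1 l
  have hhat_le : ∀ l, hatS η l0 ξ l ≤ σ l := fun l => csInf_le (hbdd l) (hmem l)
  have hhat_nonneg : ∀ l, 0 ≤ hatS η l0 ξ l := by
    intro l
    refine le_csInf ⟨σ l, hmem l⟩ ?_
    rintro x ⟨σ', hσ', _, rfl⟩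
    exact hσ'.1 l
  have hhat_ge1 : ∀ l, l ≤ m → (1 : ℝ) ≤ hatS η l0 ξ l := by
    intro l hl
    refine le_csInf ⟨σ l, hmem l⟩ ?_
    rintro x ⟨σ', hσ', hmaj, rfl⟩
    have hanti : Antitone σ' := antitone_nat_of_succ_le hσ'.2.1
    have h1 : (1 : ℝ) ≤ σ' m := by
      have := hmaj m hm
      simpa [hξdef] using this
    exact le_trans h1 (hanti hl)
  have hsummσ : Summable σ := by
    rw [← summable_nat_add_iff (m + 1)]
    have : (fun n => σ (n + (m + 1))) = fun n => η0 * η0 ^ n := by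
      funext n
      rw [hσ2 (n + (m + 1)) (by omega)]
      have : n + (m + 1) - m = n + 1 := by omega
      rw [this, pow_succ, mul_comm]
    rw [this]
    exact (summable_geometric_of_lt_one hη0pos.le hη0).mul_left η0
  have hsumhat : Summable (hatS η l0 ξ) :=
    Summable.of_nonneg_of_le hhat_nonneg hhat_le hsummσ
  refine ⟨fun l hl => le_antisymm (le_trans (hhat_le l) (le_of_eq (hσ1 l hl)))
      (hhat_ge1 l hl),
    fun l => le_trans (hhat_le l) (hσle1 l), hsumhat, ?_⟩
  have htsumσ : (∑' l, σ l) = ((m : ℝ) + 1) + η0 / (1 - η0) := by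
    have key := Summable.sum_add_tsum_nat_add (m + 1) hsummσ
    have h1 : ∑ i ∈ Finset.range (m + 1), σ i = (m : ℝ) + 1 := by
      rw [Finset.sum_congr rfl (fun i hi => hσ1 i (by
        simp only [Finset.mem_range] at hi; omega))]
      simp
    have h2 : (∑' n, σ (n + (m + 1))) = η0 / (1 - η0) := by
      have he : (fun n => σ (n + (m + 1))) = fun n => η0 * η0 ^ n := by
        funext n
        rw [hσ2 (n + (m + 1)) (by omega)]
        have : n + (m + 1) - m = n + 1 := by omega
        rw [this, pow_succ, mul_comm]
      rw [he, tsum_mul_left, tsum_geometric_of_lt_one hη0pos.le hη0, div_eq_mul_inv]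
    rw [← key, h1, h2]
  calc (∑' l, hatS η l0 ξ l) ≤ ∑' l, σ l := Summable.tsum_le_tsum hhat_le hsumhat hsummσ
    _ = ((m : ℝ) + 1) + η0 / (1 - η0) := htsumσ
end

section
/- If $\xi\in\ell^\infty$ satisfies $\lim_{l\to\infty}\xi_l=0$, then its minimal $S$-majorant $\hat\xi$ also satisfies $\lim_{l\to\infty}\hat\xi_l=0$. -/
/-- If a bounded sequence `ξ` tends to `0`, then so does its minimal `S`-majorant `ξ̂`. -/
theorem stmt12 (η : ℕ → ℝ) (l0 : ℕ) (η0 : ℝ)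
    (hη : ∀ l, 0 < η l) (hη0 : η0 < 1) (hsup : ∀ l, l0 ≤ l → η (l + 1) ≤ η0)
    (ξ : ℕ → ℝ) (hb : ∃ C : ℝ, ∀ l, |ξ l| ≤ C)
    (h0 : Filter.Tendsto ξ Filter.atTop (nhds 0)) :
    Filter.Tendsto (hatS η l0 ξ) Filter.atTop (nhds 0) := by
  classical
  set r : ℝ := max η0 (1/2) with hr_def
  have hr0 : (0:ℝ) < r := lt_of_lt_of_le (by norm_num) (le_max_right _ _)
  have hr1 : r < 1 := max_lt hη0 (by norm_num)
  have hrη : ∀ l, l0 ≤ l → η (l + 1) ≤ r := fun l hl =>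
    le_trans (hsup l hl) (le_max_left _ _)
  have key : ∀ b c : ℝ, 0 ≤ b → 0 ≤ c →
      (fun l => c + b * r ^ l) ∈ mS η l0 := by
    intro b c hbnn hcnn
    refine ⟨fun l => by positivity, fun l => ?_, fun l hl => ?_⟩
    · show c + b * r ^ (l + 1) ≤ c + b * r ^ l
      have h := mul_le_mul_of_nonneg_left
        (pow_le_pow_of_le_one hr0.le hr1.le (by omega : l ≤ l + 1)) hbnn
      linarith
    · have hp : (0:ℝ) ≤ r ^ l := pow_nonneg hr0.le l
      have hηr := hrη l hl
      have h1 : (1:ℝ) - r ≥ 0 := by linarith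
      simp only [pow_succ]
      nlinarith [mul_nonneg (sub_nonneg.2 hηr)
        (mul_nonneg (mul_nonneg hbnn hp) h1)]
  obtain ⟨C, hC⟩ := hb
  have hC0 : 0 ≤ C := (abs_nonneg _).trans (hC 0)
  have hnn : ∀ l, 0 ≤ hatS η l0 ξ l := by
    intro l
    apply Real.sInf_nonneg
    rintro x ⟨σ, hσ, -, rfl⟩
    exact hσ.1 l
  have hbdd : ∀ l, BddBelow {x : ℝ | ∃ σ : ℕ → ℝ,
      σ ∈ mS η l0 ∧ (∀ l', l0 ≤ l' → ξ l' ≤ σ l') ∧ x = σ l} := by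
    intro l
    refine ⟨0, ?_⟩
    rintro x ⟨σ, hσ, -, rfl⟩
    exact hσ.1 l
  rw [Metric.tendsto_atTop] at h0 ⊢
  intro ε hε
  obtain ⟨N0, hN0⟩ := h0 (ε/2) (by linarith)
  set N : ℕ := max N0 l0 with hN_def
  set b : ℝ := C / r ^ N with hb_def
  have hbnn : 0 ≤ b := div_nonneg hC0 (pow_nonneg hr0.le N)
  have hσS := key b (ε/2) hbnn (by linarith)
  have hmaj : ∀ l, l0 ≤ l → ξ l ≤ ε/2 + b * r ^ l := by
    intro l hl
    by_cases hlN : N ≤ l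
    · have h1 : |ξ l| < ε/2 := by
        have := hN0 l (le_trans (le_max_left _ _) hlN)
        simpa [Real.dist_eq] using this
      have h2 : 0 ≤ b * r ^ l := mul_nonneg hbnn (pow_nonneg hr0.le l)
      have := (abs_le.mp h1.le).2
      linarith
    · push_neg at hlN
      have hCb : C = b * r ^ N := by
        rw [hb_def, div_mul_cancel₀]
        exact (pow_pos hr0 N).ne'
      have hmono : b * r ^ N ≤ b * r ^ l :=
        mul_le_mul_of_nonneg_left
          (pow_le_pow_of_le_one hr0.le hr1.le hlN.le) hbnn
      have := (abs_le.mp (hC l)).2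
      linarith
  have hub : ∀ l, hatS η l0 ξ l ≤ ε/2 + b * r ^ l := by
    intro l
    exact csInf_le (hbdd l) ⟨_, hσS, hmaj, rfl⟩
  have htend : Filter.Tendsto (fun l : ℕ => b * r ^ l) Filter.atTop (nhds 0) := by
    have := (tendsto_pow_atTop_nhds_zero_of_lt_one hr0.le hr1).const_mul b
    simpa using this
  obtain ⟨M, hM⟩ := Metric.tendsto_atTop.mp htend (ε/2) (by linarith)
  refine ⟨M, fun n hn => ?_⟩
  have h1 := hM n hn
  rw [Real.dist_eq] at h1 ⊢
  have h2 : 0 ≤ b * r ^ n := mul_nonneg hbnn (pow_nonneg hr0.le n)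
  have h3 : b * r ^ n < ε/2 := by
    rw [sub_zero, abs_of_nonneg h2] at h1; exact h1
  rw [sub_zero, abs_of_nonneg (hnn n)]
  exact lt_of_le_of_lt (hub n) (by linarith)
end

section
/- For any nonnegative decreasing sequence $\xi\in\ell^\infty$: $\sum_{l=1}^\infty\xi_l<\infty$ if and only if $\sum_{l=1}^\infty\hat\xi_l<\infty$, where $\hat\xi$ is the minimal $S$-majorant of $\xi$. Moreover, in the summable case, $\|\hat\xi\|_{\ell^1} \leq \frac{\xi_1\eta_0}{1-\eta_0} + \sum_{k=1}^\infty \xi_k$. -/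
/-- For a nonnegative decreasing sequence `ξ`, `ξ` is summable iff its minimal
`S`-majorant `ξ̂` is summable, and in the summable case
`‖ξ̂‖₁ ≤ ξ₁ η₀/(1-η₀) + ∑ ξ_k`.  (0-based indexing: `ξ 0` is the paper `ξ₁`.) -/
theorem stmt13 (η : ℕ → ℝ) (l0 : ℕ) (η0 : ℝ)
    (hη : ∀ l, 0 < η l) (hη0 : η0 < 1) (hsup : ∀ l, l0 ≤ l → η (l + 1) ≤ η0)
    (ξ : ℕ → ℝ) (hpos : ∀ l, 0 ≤ ξ l) (hdec : ∀ l, ξ (l + 1) ≤ ξ l) :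
    (Summable ξ ↔ Summable (hatS η l0 ξ)) ∧
    (Summable ξ →
      (∑' l : ℕ, hatS η l0 ξ l) ≤ ξ 0 * η0 / (1 - η0) + ∑' l : ℕ, ξ l) := by
  have hA : Antitone ξ := antitone_nat_of_succ_le hdec
  have hη0pos : 0 < η0 := lt_of_lt_of_le (hη (l0 + 1)) (hsup l0 le_rfl)
  have h1η : 0 < 1 - η0 := by linarith
  have hconst : ∀ l : ℕ, (ξ 0) ∈ {x : ℝ | ∃ σ : ℕ → ℝ,
      σ ∈ mS η l0 ∧ (∀ l', l0 ≤ l' → ξ l' ≤ σ l') ∧ x = σ l} := by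
    intro l
    exact ⟨fun _ => ξ 0, ⟨fun _ => hpos 0, fun _ => le_rfl, fun l _ => by simp⟩,
      fun l' _ => hA (Nat.zero_le l'), rfl⟩
  have hbdd : ∀ l : ℕ, BddBelow {x : ℝ | ∃ σ : ℕ → ℝ,
      σ ∈ mS η l0 ∧ (∀ l', l0 ≤ l' → ξ l' ≤ σ l') ∧ x = σ l} := by
    intro l
    refine ⟨0, ?_⟩
    rintro x ⟨σ, hσ, -, rfl⟩
    exact hσ.1 l
  have hat_nonneg : ∀ l, 0 ≤ hatS η l0 ξ l := by
    intro l
    refine le_csInf ⟨ξ 0, hconst l⟩ ?_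
    rintro x ⟨σ, hσ, -, rfl⟩
    exact hσ.1 l
  have hat_ge : ∀ l, l0 ≤ l → ξ l ≤ hatS η l0 ξ l := by
    intro l hl
    refine le_csInf ⟨ξ 0, hconst l⟩ ?_
    rintro x ⟨σ, hσ, hm, rfl⟩
    exact hm l hl
  have hat_le : ∀ (σ : ℕ → ℝ), σ ∈ mS η l0 → (∀ l', l0 ≤ l' → ξ l' ≤ σ l') →
      ∀ l, hatS η l0 ξ l ≤ σ l := by
    intro σ hσ hm l
    exact csInf_le (hbdd l) ⟨σ, hσ, hm, rfl⟩
  have main : Summable ξ → Summable (hatS η l0 ξ) ∧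
      (∑' l : ℕ, hatS η l0 ξ l) ≤ ξ 0 * η0 / (1 - η0) + ∑' l : ℕ, ξ l := by
    intro hsum
    set D : ℕ → ℝ := fun k => ξ k - ξ (k + 1) with hD
    have hDpos : ∀ k, 0 ≤ D k := fun k => sub_nonneg.2 (hdec k)
    set U : ℕ → ℝ := fun l => ∑ k ∈ Finset.range l, D k * η0 ^ (l - k) with hU
    have hUrec : ∀ l, U (l + 1) = η0 * (U l + D l) := by
      intro l
      have h1 : ∀ k ∈ Finset.range l, D k * η0 ^ (l + 1 - k) = η0 * (D k * η0 ^ (l - k)) := by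
        intro k hk
        have hk' : k < l := Finset.mem_range.1 hk
        have he : l + 1 - k = (l - k) + 1 := by omega
        rw [he, pow_succ]; ring
      calc U (l + 1) = ∑ k ∈ Finset.range l, D k * η0 ^ (l + 1 - k) + D l * η0 ^ (l + 1 - l) :=
            Finset.sum_range_succ _ l
        _ = ∑ k ∈ Finset.range l, η0 * (D k * η0 ^ (l - k)) + D l * η0 ^ (l + 1 - l) :=
            by rw [Finset.sum_congr rfl h1]
        _ = η0 * (U l + D l) := by
            rw [← Finset.mul_sum, Nat.add_sub_cancel_left, pow_one]
            ring
    have hUnonneg : ∀ l, 0 ≤ U l := by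
      intro l
      exact Finset.sum_nonneg fun k _ => mul_nonneg (hDpos k) (pow_nonneg hη0pos.le _)
    set σ : ℕ → ℝ := fun l => ξ l + U l with hσdef
    have hdiff : ∀ l, σ l - σ (l + 1) = (1 - η0) * (D l + U l) := by
      intro l
      have := hUrec l
      simp only [hσdef, hD] at *
      linarith [this]
    have hσmem : σ ∈ mS η l0 := by
      refine ⟨fun l => add_nonneg (hpos l) (hUnonneg l), ?_, ?_⟩
      · intro l
        have := hdiff l
        nlinarith [hDpos l, hUnonneg l]
      · intro l hl
        have h1 := hdiff l
        have h2 := hdiff (l + 1)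
        have h3 := hUrec l
        have h4 : η (l + 1) ≤ η0 := hsup l hl
        have h5 : 0 < η (l + 1) := hη (l + 1)
        nlinarith [hDpos l, hDpos (l + 1), hUnonneg l, hUnonneg (l + 1),
          mul_nonneg (sub_nonneg.2 h4) (add_nonneg (hDpos l) (hUnonneg l)),
          mul_nonneg h1η.le (hDpos (l + 1))]
    have key : ∀ N, (1 - η0) * (∑ l ∈ Finset.range N, U l) + U N = η0 * (ξ 0 - ξ N) := by
      intro N
      induction N with
      | zero => simp [hU]
      | succ n ih =>
        rw [Finset.sum_range_succ, hUrec n]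
        have hDn : D n = ξ n - ξ (n + 1) := rfl
        rw [hDn]
        linarith [ih]
    have hSU : ∀ N, ∑ l ∈ Finset.range N, U l ≤ ξ 0 * η0 / (1 - η0) := by
      intro N
      rw [le_div_iff₀ h1η]
      nlinarith [key N, hUnonneg N, mul_nonneg hη0pos.le (hpos N)]
    have hσle : ∀ N, ∑ l ∈ Finset.range N, σ l ≤ ξ 0 * η0 / (1 - η0) + ∑' l : ℕ, ξ l := by
      intro N
      have h1 : ∑ l ∈ Finset.range N, σ l
          = ∑ l ∈ Finset.range N, ξ l + ∑ l ∈ Finset.range N, U l := by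
        simp [hσdef, Finset.sum_add_distrib]
      have h2 : ∑ l ∈ Finset.range N, ξ l ≤ ∑' l : ℕ, ξ l :=
        Summable.sum_le_tsum _ (fun i _ => hpos i) hsum
      linarith [hSU N]
    have hσsum : Summable σ :=
      summable_of_sum_range_le (fun n => add_nonneg (hpos n) (hUnonneg n)) hσle
    have hhat_le : ∀ l, hatS η l0 ξ l ≤ σ l :=
      hat_le σ hσmem fun l' _ => le_add_of_nonneg_right (hUnonneg l')
    have hhsum : Summable (hatS η l0 ξ) :=
      Summable.of_nonneg_of_le hat_nonneg hhat_le hσsum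
    refine ⟨hhsum, ?_⟩
    calc (∑' l : ℕ, hatS η l0 ξ l) ≤ ∑' l : ℕ, σ l := Summable.tsum_le_tsum hhat_le hhsum hσsum
      _ ≤ ξ 0 * η0 / (1 - η0) + ∑' l : ℕ, ξ l := Summable.tsum_le_of_sum_range_le hσsum hσle
  have rev : Summable (hatS η l0 ξ) → Summable ξ := by
    intro h
    have h1 : Summable (fun n => hatS η l0 ξ (n + l0)) := (summable_nat_add_iff l0).2 h
    have h2 : Summable (fun n => ξ (n + l0)) :=
      Summable.of_nonneg_of_le (fun n => hpos _) (fun n => hat_ge _ (Nat.le_add_left _ _)) h1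
    exact (summable_nat_add_iff l0).1 h2
  exact ⟨⟨fun h => (main h).1, rev⟩, fun h => (main h).2⟩
end

section
/- Suppose positive sequences $q^{(m)}$ converge to $\tilde q$ in $\ell^\infty$, each satisfies $\sum_l q^{(m)}_l\mu_m^l = 1$ for some $\mu_m\in(0,1)$, the sequence $(\mu_m)$ is nondecreasing, $q^{(m)}_{l}\geq q^{(m+1)}_l\geq\tilde q_l$, and $\sum_l \tilde q_l\leq 1$ with strict inequality possible. Then $\lim_{m\to\infty}\mu_m = 1$. -/
/-- Key step for `Ã_min = 0` under (NEQ): if positive weights `q^{(m)} ↓ q̃` converge in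
`ℓ^∞`, each `μ_m ∈ (0,1)` satisfies `∑_l q^{(m)}_l μ_m^l = 1`, the `μ_m` are nondecreasing,
and `∑ q̃_l ≤ 1`, then `μ_m → 1`.  (Lean index `l` is paper index `l+1`.) -/
theorem stmt17 (q : ℕ → ℕ → ℝ) (tq : ℕ → ℝ) (μ : ℕ → ℝ)
    (hpos : ∀ m l, 0 < q m l) (htqpos : ∀ l, 0 < tq l)
    (hconv : ∀ ε : ℝ, 0 < ε → ∃ M, ∀ m, M ≤ m → ∀ l, |q m l - tq l| ≤ ε)
    (hμ : ∀ m, 0 < μ m ∧ μ m < 1)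
    (hsum : ∀ m, Summable (fun l : ℕ => q m l * μ m ^ (l + 1)))
    (hone : ∀ m, (∑' l : ℕ, q m l * μ m ^ (l + 1)) = 1)
    (hmono : Monotone μ)
    (hdec : ∀ m l, tq l ≤ q (m + 1) l ∧ q (m + 1) l ≤ q m l)
    (htq : Summable tq) (htq1 : (∑' l : ℕ, tq l) ≤ 1) :
    Filter.Tendsto μ Filter.atTop (nhds 1) := by
  have hbdd : BddAbove (Set.range μ) := ⟨1, by rintro x ⟨m, rfl⟩; exact (hμ m).2.le⟩
  set L := ⨆ m, μ m with hLdef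
  have hLtend : Filter.Tendsto μ Filter.atTop (nhds L) := tendsto_atTop_ciSup hmono hbdd
  have hμL : ∀ m, μ m ≤ L := fun m => le_ciSup hbdd m
  have hL0 : 0 < L := lt_of_lt_of_le (hμ 0).1 (hμL 0)
  have hL1 : L ≤ 1 := ciSup_le fun m => (hμ m).2.le
  rcases eq_or_lt_of_le hL1 with h | h
  · rwa [h] at hLtend
  · exfalso
    have hgeo : Summable (fun l : ℕ => L ^ (l + 1)) := by
      simpa [pow_succ] using (summable_geometric_of_lt_one hL0.le h).mul_right L
    set C := ∑' l : ℕ, L ^ (l + 1) with hC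
    have hC0 : 0 ≤ C := tsum_nonneg fun l => pow_nonneg hL0.le _
    have hS2 : Summable (fun l : ℕ => tq l * L ^ (l + 1)) := by
      apply Summable.of_nonneg_of_le
        (fun l => mul_nonneg (htqpos l).le (pow_nonneg hL0.le _)) (fun l => ?_) htq
      calc tq l * L ^ (l + 1) ≤ tq l * 1 :=
            mul_le_mul_of_nonneg_left (pow_le_one₀ hL0.le h.le) (htqpos l).le
        _ = tq l := mul_one _
    have key : ∀ ε : ℝ, 0 < ε → (1 : ℝ) ≤ L + ε * C := by
      intro ε hε
      obtain ⟨M, hM⟩ := hconv ε hε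
      set m := M with hm
      have hqle : ∀ l, q m l ≤ tq l + ε := by
        intro l
        have h2 := (abs_le.mp (hM m le_rfl l)).2
        linarith
      have hSb : Summable (fun l : ℕ => tq l * L ^ (l + 1) + ε * L ^ (l + 1)) :=
        hS2.add (hgeo.mul_left ε)
      have hS1 : Summable (fun l : ℕ => q m l * L ^ (l + 1)) := by
        apply Summable.of_nonneg_of_le
          (fun l => mul_nonneg (hpos m l).le (pow_nonneg hL0.le _)) (fun l => ?_) hSb
        have := mul_le_mul_of_nonneg_right (hqle l) (pow_nonneg hL0.le (l + 1))
        nlinarith [this]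
      have step1 : (1 : ℝ) ≤ ∑' l : ℕ, q m l * L ^ (l + 1) := by
        rw [← hone m]
        apply Summable.tsum_le_tsum _ (hsum m) hS1
        intro l
        exact mul_le_mul_of_nonneg_left (pow_le_pow_left₀ (hμ m).1.le (hμL m) _) (hpos m l).le
      have step2 : (∑' l : ℕ, q m l * L ^ (l + 1)) ≤ (∑' l : ℕ, tq l * L ^ (l + 1)) + ε * C := by
        have h3 : (∑' l : ℕ, q m l * L ^ (l + 1)) ≤
            ∑' l : ℕ, (tq l * L ^ (l + 1) + ε * L ^ (l + 1)) := by
          apply Summable.tsum_le_tsum _ hS1 hSb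
          intro l
          have := mul_le_mul_of_nonneg_right (hqle l) (pow_nonneg hL0.le (l + 1))
          nlinarith [this]
        rwa [Summable.tsum_add hS2 (hgeo.mul_left ε), tsum_mul_left] at h3
      have step3 : (∑' l : ℕ, tq l * L ^ (l + 1)) ≤ L := by
        have h1 : (∑' l : ℕ, tq l * L ^ (l + 1)) ≤ ∑' l : ℕ, tq l * L := by
          apply Summable.tsum_le_tsum _ hS2 (htq.mul_right L)
          intro l
          apply mul_le_mul_of_nonneg_left _ (htqpos l).le
          calc L ^ (l + 1) ≤ L ^ 1 := pow_le_pow_of_le_one hL0.le h.le (Nat.le_add_left 1 l)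
            _ = L := pow_one L
        rw [tsum_mul_right] at h1
        calc (∑' l : ℕ, tq l * L ^ (l + 1)) ≤ (∑' l : ℕ, tq l) * L := h1
          _ ≤ 1 * L := mul_le_mul_of_nonneg_right htq1 hL0.le
          _ = L := one_mul L
      linarith
    have h1L : (1 : ℝ) ≤ L := by
      apply le_of_forall_pos_le_add
      intro δ hδ
      have hε : 0 < δ / (C + 1) := div_pos hδ (by linarith)
      have := key _ hε
      have hεC : δ / (C + 1) * C ≤ δ := by
        rw [div_mul_eq_mul_div, div_le_iff₀ (by linarith : (0:ℝ) < C + 1)]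
        nlinarith
      linarith
    linarith
end

section
/- Fix $l_0$, a constant $\mu_0\in(0,1)$, and let $\zeta_l:[t_1,t_2]\to[0,\infty)$ (for $l_0\leq l\leq m+1$) be differentiable functions satisfying $\frac{d}{dt}\zeta_l(t)\leq c_l\big(\mu_0\zeta_{l-1}(t) - (1+\mu_0)\zeta_l(t) + \zeta_{l+1}(t)\big)$ with constants $c_l>0$, for $l_0+1\leq l\leq m$. Let $\sigma\in S_+$ (so $\mu_0\sigma_{l-1}+\sigma_{l+1}\leq(1+\mu_0)\sigma_l$ for $l\geq l_0$) and let $H\geq 0$ be such that $\zeta_l(t)\leq H\sigma_l$ for $l\in\{l_0,m+1\}$ and all $t\in[t_1,t_2]$, and $\zeta_l(t_1)< H\sigma_l$ for $l_0<l\leq m$. Then $\zeta_l(t)< H\sigma_l$ for all $l_0<l\leq m$ and all $t\in[t_1,t_2]$. -/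
open Set Filter Topology

/-- One-sided sign of the derivative at a right endpoint where the max is attained. -/
theorem aux_deriv_nonneg18 {f : ℝ → ℝ} {f' a b s : ℝ} (hab : a < s) (hsb : s ≤ b)
    (hd : HasDerivWithinAt f f' (Set.Icc a b) s)
    (hmax : ∀ t ∈ Set.Icc a s, f t ≤ f s) : 0 ≤ f' := by
  have hsub : Set.Icc a s ⊆ Set.Icc a b := Set.Icc_subset_Icc le_rfl hsb
  have hd' : HasDerivWithinAt f f' (Set.Icc a s) s := hd.mono hsub
  have hslope := hasDerivWithinAt_iff_tendsto_slope.1 hd'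
  have hIcodiff : Set.Icc a s \ {s} = Set.Ico a s := Set.Icc_sdiff_right
  rw [hIcodiff] at hslope
  have hne : (𝓝[Set.Ico a s] s).NeBot := by
    refine mem_closure_iff_nhdsWithin_neBot.1 ?_
    rw [closure_Ico hab.ne]
    exact ⟨le_of_lt hab, le_rfl⟩
  refine ge_of_tendsto hslope ?_
  filter_upwards [self_mem_nhdsWithin] with t htmem
  have h1 : f t - f s ≤ 0 := sub_nonpos.2 (hmax t ⟨htmem.1, le_of_lt htmem.2⟩)
  have h2 : t - s < 0 := sub_neg.2 htmem.2
  rw [slope_def_field]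
  exact div_nonneg_of_nonpos h1 h2.le

/-- Derivative of the comparison barrier. -/
theorem aux_barrier_deriv18 (t1 s ε Hσ : ℝ) :
    HasDerivAt (fun t => Hσ + ε * Real.exp (t - t1)) (ε * Real.exp (s - t1)) s := by
  have h1 : HasDerivAt (fun t : ℝ => Real.exp (t - t1)) (Real.exp (s - t1)) s := by
    simpa [Function.comp_def] using ((Real.hasDerivAt_exp (s - t1)).comp s ((hasDerivAt_id s).sub_const t1))
  simpa using (h1.const_mul ε).const_add Hσ

/-- Discrete maximum principle / Gronwall argument: if the tails `ζ_l` satisfy the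
differential inequalities `ζ_l' ≤ c_l (μ₀ ζ_{l-1} - (1+μ₀) ζ_l + ζ_{l+1})` for
`l0 < l ≤ m`, `σ ∈ S₊` (so `μ₀ σ_{l-1} + σ_{l+1} ≤ (1+μ₀) σ_l` for `l ≥ l0`), the
boundary values satisfy `ζ_l ≤ H σ_l` for `l ∈ {l0, m+1}` on `[t1,t2]`, and initially
`ζ_l(t1) < H σ_l` for `l0 < l ≤ m`, then `ζ_l(t) < H σ_l` on all of `[t1,t2]`. -/
theorem stmt18 (l0 m : ℕ) (hl0 : 1 ≤ l0) (hlm : l0 ≤ m)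
    (μ0 : ℝ) (hμ0 : 0 < μ0) (hμ1 : μ0 < 1)
    (t1 t2 : ℝ) (ht : t1 ≤ t2)
    (ζ ζ' : ℕ → ℝ → ℝ) (c : ℕ → ℝ) (hc : ∀ l, 0 < c l)
    (hnonneg : ∀ l t, l0 ≤ l → l ≤ m + 1 → t ∈ Set.Icc t1 t2 → 0 ≤ ζ l t)
    (hderiv : ∀ l t, l0 + 1 ≤ l → l ≤ m → t ∈ Set.Icc t1 t2 →
      HasDerivWithinAt (ζ l) (ζ' l t) (Set.Icc t1 t2) t)
    (hineq : ∀ l t, l0 + 1 ≤ l → l ≤ m → t ∈ Set.Icc t1 t2 →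
      ζ' l t ≤ c l * (μ0 * ζ (l - 1) t - (1 + μ0) * ζ l t + ζ (l + 1) t))
    (σ : ℕ → ℝ) (hσpos : ∀ l, 0 < σ l) (hσdec : ∀ l, σ (l + 1) ≤ σ l)
    (hσS : ∀ l, l0 ≤ l → μ0 * σ (l - 1) + σ (l + 1) ≤ (1 + μ0) * σ l)
    (H : ℝ) (hH : 0 ≤ H)
    (hbdry : ∀ t ∈ Set.Icc t1 t2, ζ l0 t ≤ H * σ l0 ∧ ζ (m + 1) t ≤ H * σ (m + 1))
    (hinit : ∀ l, l0 < l → l ≤ m → ζ l t1 < H * σ l) :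
    ∀ l, l0 < l → l ≤ m → ∀ t ∈ Set.Icc t1 t2, ζ l t < H * σ l := by
  have hcont : ∀ l, l0 + 1 ≤ l → l ≤ m → ContinuousOn (ζ l) (Set.Icc t1 t2) :=
    fun l h1 h2 t htm => (hderiv l t h1 h2 htm).continuousWithinAt
  -- Stage 1: comparison with a moving barrier
  have key : ∀ ε : ℝ, 0 < ε → ∀ l, l0 < l → l ≤ m → ∀ t ∈ Set.Icc t1 t2,
      ζ l t < H * σ l + ε * Real.exp (t - t1) := by
    intro ε hε
    by_contra hcon
    push_neg at hcon
    obtain ⟨l', hl'1, hl'2, t', ht', htouch'⟩ := hcon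
    set A : Set ℝ := ⋃ l ∈ Finset.Ioc l0 m,
      (Set.Icc t1 t2 ∩
        (fun t => ζ l t - (H * σ l + ε * Real.exp (t - t1))) ⁻¹' Set.Ici 0) with hAdef
    have hmemA : ∀ x : ℝ, x ∈ A ↔ ∃ l, (l0 < l ∧ l ≤ m) ∧ x ∈ Set.Icc t1 t2 ∧
        H * σ l + ε * Real.exp (x - t1) ≤ ζ l x := by
      intro x
      simp only [hAdef, Set.mem_iUnion, Finset.mem_Ioc, Set.mem_inter_iff, Set.mem_preimage,
        Set.mem_Ici, sub_nonneg, exists_prop]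
    have hAclosed : IsClosed A := by
      apply isClosed_biUnion_finset
      intro l hlmem
      rw [Finset.mem_Ioc] at hlmem
      refine ContinuousOn.preimage_isClosed_of_isClosed ?_ isClosed_Icc isClosed_Ici
      exact (hcont l hlmem.1 hlmem.2).sub (Continuous.continuousOn (by fun_prop))
    have hAne : A.Nonempty := ⟨t', (hmemA t').2 ⟨l', ⟨hl'1, hl'2⟩, ht', htouch'⟩⟩
    have hAsub : A ⊆ Set.Icc t1 t2 := by
      intro x hx
      exact ((hmemA x).1 hx).choose_spec.2.1
    have hAbdd : BddBelow A := (bddBelow_Icc).mono hAsub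
    have hsA : sInf A ∈ A := hAclosed.csInf_mem hAne hAbdd
    set s := sInf A with hsdef
    obtain ⟨l1, ⟨hl1a, hl1b⟩, hsIcc, htouch⟩ := (hmemA s).1 hsA
    have hεE : 0 < ε * Real.exp (s - t1) := mul_pos hε (Real.exp_pos _)
    have ht1s : t1 < s := by
      rcases lt_or_eq_of_le hsIcc.1 with h | h
      · exact h
      · exfalso
        have h1 := hinit l1 hl1a hl1b
        rw [← h] at htouch
        simp only [sub_self, Real.exp_zero, mul_one] at htouch
        linarith
    have hnotbefore : ∀ t, t ∈ Set.Ico t1 s → ∀ l, l0 < l → l ≤ m →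
        ζ l t < H * σ l + ε * Real.exp (t - t1) := by
      intro t htm l ha hb
      by_contra hge
      push_neg at hge
      have htA : t ∈ A := (hmemA t).2 ⟨l, ⟨ha, hb⟩, ⟨htm.1, htm.2.le.trans hsIcc.2⟩, hge⟩
      exact absurd (csInf_le hAbdd htA) (not_le.2 htm.2)
    have hneIco : (𝓝[Set.Ico t1 s] s).NeBot := by
      refine mem_closure_iff_nhdsWithin_neBot.1 ?_
      rw [closure_Ico ht1s.ne]
      exact ⟨ht1s.le, le_rfl⟩
    -- at time s, all levels are (weakly) below the barrier
    have hbound : ∀ l, l0 ≤ l → l ≤ m + 1 → ζ l s ≤ H * σ l + ε * Real.exp (s - t1) := by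
      intro l ha hb
      rcases eq_or_lt_of_le ha with h | h
      · have h2 := (hbdry s hsIcc).1
        rw [← h]
        linarith
      · rcases eq_or_lt_of_le hb with h' | h'
        · rw [h']
          have := (hbdry s hsIcc).2
          linarith
        · have hlm' : l ≤ m := Nat.lt_succ_iff.1 h'
          have hlo : l0 + 1 ≤ l := h
          have hcw : ContinuousWithinAt
              (fun t => ζ l t - (H * σ l + ε * Real.exp (t - t1))) (Set.Ico t1 s) s := by
            refine ContinuousWithinAt.mono ?_ (Set.Ico_subset_Icc_self.trans
              (Set.Icc_subset_Icc le_rfl hsIcc.2))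
            exact ((hcont l hlo hlm' s hsIcc).sub
              ((Continuous.continuousOn (by fun_prop)) s hsIcc))
          have hlim : ζ l s - (H * σ l + ε * Real.exp (s - t1)) ≤ 0 := by
            refine le_of_tendsto hcw ?_
            filter_upwards [self_mem_nhdsWithin] with t htmem
            have := hnotbefore t htmem l h hlm'
            linarith
          linarith
    have heq : ζ l1 s = H * σ l1 + ε * Real.exp (s - t1) :=
      le_antisymm (hbound l1 hl1a.le (by omega)) htouch
    -- differential inequality at the touching time gives ζ' l1 s ≤ 0
    have hupper : ζ' l1 s ≤ 0 := by
      have hd1 := hineq l1 s hl1a hl1b hsIcc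
      have hz1 := hbound (l1 - 1) (by omega) (by omega)
      have hz2 := hbound (l1 + 1) (by omega) (by omega)
      have hσ' := hσS l1 hl1a.le
      have hbr : μ0 * ζ (l1 - 1) s - (1 + μ0) * ζ l1 s + ζ (l1 + 1) s ≤ 0 := by
        have e1 : μ0 * ζ (l1 - 1) s ≤ μ0 * (H * σ (l1 - 1) + ε * Real.exp (s - t1)) :=
          mul_le_mul_of_nonneg_left hz1 hμ0.le
        have e2 : H * (μ0 * σ (l1 - 1) + σ (l1 + 1)) ≤ H * ((1 + μ0) * σ l1) :=
          mul_le_mul_of_nonneg_left hσ' hH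
        rw [heq]
        nlinarith
      calc ζ' l1 s ≤ c l1 * (μ0 * ζ (l1 - 1) s - (1 + μ0) * ζ l1 s + ζ (l1 + 1) s) := hd1
        _ ≤ 0 := mul_nonpos_of_nonneg_of_nonpos (hc l1).le hbr
    -- one-sided derivative at the touching time is ≥ ε e^{s-t1} > 0 : contradiction
    have hdf : HasDerivWithinAt
        (fun t => ζ l1 t - (H * σ l1 + ε * Real.exp (t - t1)))
        (ζ' l1 s - ε * Real.exp (s - t1)) (Set.Icc t1 t2) s :=
      (hderiv l1 s hl1a hl1b hsIcc).sub (aux_barrier_deriv18 t1 s ε (H * σ l1)).hasDerivWithinAt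
    have hmax : ∀ t ∈ Set.Icc t1 s,
        (fun t => ζ l1 t - (H * σ l1 + ε * Real.exp (t - t1))) t ≤
        (fun t => ζ l1 t - (H * σ l1 + ε * Real.exp (t - t1))) s := by
      intro t htm
      simp only
      rcases lt_or_eq_of_le htm.2 with h | h
      · have := hnotbefore t ⟨htm.1, h⟩ l1 hl1a hl1b
        rw [heq]; linarith
      · rw [h]
    have h0 := aux_deriv_nonneg18 ht1s hsIcc.2 hdf hmax
    linarith
  -- Stage 1 corollary: weak inequality everywhere
  have hle : ∀ l, l0 ≤ l → l ≤ m + 1 → ∀ t ∈ Set.Icc t1 t2, ζ l t ≤ H * σ l := by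
    intro l ha hb t htm
    rcases eq_or_lt_of_le ha with h | h
    · rw [← h]; exact (hbdry t htm).1
    · rcases eq_or_lt_of_le hb with h' | h'
      · rw [h']; exact (hbdry t htm).2
      · have hlm' : l ≤ m := Nat.lt_succ_iff.1 h'
        by_contra hgt
        push_neg at hgt
        have hE : (0:ℝ) < Real.exp (t - t1) := Real.exp_pos _
        have hεpos : 0 < (ζ l t - H * σ l) / Real.exp (t - t1) := by
          apply div_pos (by linarith) hE
        have := key _ hεpos l h hlm' t htm
        rw [div_mul_cancel₀ _ hE.ne'] at this
        linarith
  -- Stage 2: strict inequality via Gronwall / monotonicity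
  intro l hla hlb t htm
  have hl1 : l0 + 1 ≤ l := hla
  set K := c l * (1 + μ0) with hKdef
  set u := fun r => (H * σ l - ζ l r) * Real.exp (K * r) with hudef
  have hder : ∀ x ∈ Set.Ioo t1 t2, HasDerivAt u
      (-(ζ' l x) * Real.exp (K * x) + (H * σ l - ζ l x) * (Real.exp (K * x) * K)) x := by
    intro x hx
    have hxIcc : x ∈ Set.Icc t1 t2 := Set.Ioo_subset_Icc_self hx
    have hz : HasDerivAt (ζ l) (ζ' l x) x :=
      (hderiv l x hl1 hlb hxIcc).hasDerivAt (Icc_mem_nhds hx.1 hx.2)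
    have hg : HasDerivAt (fun r => H * σ l - ζ l r) (-(ζ' l x)) x := hz.const_sub _
    have he : HasDerivAt (fun r => Real.exp (K * r)) (Real.exp (K * x) * K) x := by
      simpa [Function.comp_def] using (Real.hasDerivAt_exp (K * x)).comp x ((hasDerivAt_id x).const_mul K)
    exact hg.mul he
  have humono : MonotoneOn u (Set.Icc t1 t2) := by
    apply monotoneOn_of_deriv_nonneg (convex_Icc t1 t2)
    · exact (continuousOn_const.sub (hcont l hl1 hlb)).mul
        (Continuous.continuousOn (by fun_prop))
    · intro x hx
      rw [interior_Icc] at hx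
      exact (hder x hx).differentiableAt.differentiableWithinAt
    · intro x hx
      rw [interior_Icc] at hx
      rw [(hder x hx).deriv]
      have hxIcc : x ∈ Set.Icc t1 t2 := Set.Ioo_subset_Icc_self hx
      have hid := hineq l x hl1 hlb hxIcc
      have hb1 := hle (l - 1) (by omega) (by omega) x hxIcc
      have hb2 := hle (l + 1) (by omega) (by omega) x hxIcc
      have hσ' := hσS l hla.le
      have hkey : ζ' l x ≤ K * (H * σ l - ζ l x) := by
        have e1 : μ0 * ζ (l - 1) x ≤ μ0 * (H * σ (l - 1)) :=
          mul_le_mul_of_nonneg_left hb1 hμ0.le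
        have e2 : H * (μ0 * σ (l - 1) + σ (l + 1)) ≤ H * ((1 + μ0) * σ l) :=
          mul_le_mul_of_nonneg_left hσ' hH
        have hbr : μ0 * ζ (l - 1) x - (1 + μ0) * ζ l x + ζ (l + 1) x ≤
            (1 + μ0) * (H * σ l) - (1 + μ0) * ζ l x := by nlinarith
        calc ζ' l x ≤ c l * (μ0 * ζ (l - 1) x - (1 + μ0) * ζ l x + ζ (l + 1) x) := hid
          _ ≤ c l * ((1 + μ0) * (H * σ l) - (1 + μ0) * ζ l x) :=
            mul_le_mul_of_nonneg_left hbr (hc l).le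
          _ = K * (H * σ l - ζ l x) := by rw [hKdef]; ring
      have hEx : (0:ℝ) < Real.exp (K * x) := Real.exp_pos _
      have hre : -(ζ' l x) * Real.exp (K * x) + (H * σ l - ζ l x) * (Real.exp (K * x) * K)
          = Real.exp (K * x) * (K * (H * σ l - ζ l x) - ζ' l x) := by ring
      rw [hre]
      exact mul_nonneg hEx.le (by linarith)
  have h12 : u t1 ≤ u t := humono ⟨le_rfl, ht⟩ htm htm.1
  have hinit' := hinit l hla hlb
  have hE1 : (0:ℝ) < Real.exp (K * t1) := Real.exp_pos _
  have hE2 : (0:ℝ) < Real.exp (K * t) := Real.exp_pos _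
  have hu1 : 0 < u t1 := mul_pos (by linarith) hE1
  have hut : 0 < (H * σ l - ζ l t) * Real.exp (K * t) := by
    rw [hudef] at h12 hu1
    simpa using lt_of_lt_of_le hu1 h12
  nlinarith
end
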